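/- There is no pair (i, ι) where i is an additive endofunctor of the category C(ℤ) of complexes of abelian groups, landing in the full subcategory of h-injective complexes with injective components, and ι : id → i is a natural transformation such that ι_M : M → i(M) is a quasi-isomorphism for every complex M. -/

import Mathlib

/-!
An additive functor preserves the relation `2 • 𝟙 = 0`, which holds for the complex `M` with
`ℤ/2` in degree `0`. So `2` kills every component of `i(M)`; these are injective, hence
divisible, hence zero. Then `i(M)` is acyclic, while `ι_M` is a quasi-isomorphism from `M`,
whose homology in degree `0` is `ℤ/2`.
-/

open CategoryTheory Limits

noncomputable section

/-- A complex is acyclic if it is exact in every degree. -/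
def IsAcyclic {C : Type u} [Category.{v} C] [Abelian C]
    (K : CochainComplex C ℤ) : Prop :=
  ∀ n : ℤ, K.ExactAt n

/-- A complex `I` is h-injective if every chain map from an acyclic complex to `I`
is null-homotopic. -/
def IsHInjective {C : Type u} [Category.{v} C] [Abelian C]
    (I : CochainComplex C ℤ) : Prop :=
  ∀ (A : CochainComplex C ℤ), IsAcyclic A → ∀ f : A ⟶ I, Nonempty (Homotopy f 0)

namespace AddCommGrpCat

theorem exists_zsmul_eq_of_injective (A : AddCommGrpCat.{0}) [Injective A] {n : ℤ} (hn : n ≠ 0)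
    (z : A) : ∃ y : A, n • y = z := by
  let m : of ℤ ⟶ of ℤ := ofHom (zmultiplesHom ℤ n)
  have : Mono m := (mono_iff_injective m).2 fun a b hab => by
    simpa [m, hn] using hab
  obtain ⟨g, hg⟩ := Injective.factors (ofHom (zmultiplesHom A z)) m
  refine ⟨g 1, ?_⟩
  have := congrArg (fun φ => φ (1 : ℤ)) hg
  simpa [m, ← map_zsmul] using this

theorem isZero_of_injective_of_zsmul_id_eq_zero (A : AddCommGrpCat.{0}) [Injective A] {n : ℤ}
    (hn : n ≠ 0) (h : n • 𝟙 A = 0) : IsZero A := by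
  refine isZero_iff_subsingleton.2 ⟨fun a b => ?_⟩
  suffices ∀ z : A, z = 0 by rw [this a, this b]
  intro z
  obtain ⟨y, rfl⟩ := exists_zsmul_eq_of_injective A hn z
  simpa using congrArg (fun φ => φ y) h

theorem natCast_zsmul_id_zmod_eq_zero (n : ℕ) : (n : ℤ) • 𝟙 (of (ZMod n)) = 0 := by
  ext x
  simp

end AddCommGrpCat

theorem HomologicalComplex.exactAt_single_obj_self_iff {C ι : Type*} [Category C] [Abelian C]
    (c : ComplexShape ι) [DecidableEq ι] (j : ι) (A : C) :
    ((single C c j).obj A).ExactAt j ↔ IsZero A := by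
  rw [exactAt_iff_isZero_homology]
  exact ⟨fun h => h.of_iso (singleObjHomologySelfIso c j A).symm,
    fun h => h.of_iso (singleObjHomologySelfIso c j A)⟩

theorem CategoryTheory.Functor.zsmul_id_obj_eq_zero {C D : Type*} [Category C] [Category D]
    [Preadditive C] [Preadditive D] (F : C ⥤ D) [F.Additive] {X : C} {n : ℤ}
    (h : n • 𝟙 X = 0) : n • 𝟙 (F.obj X) = 0 := by
  rw [← F.map_id, ← F.map_zsmul, h, F.map_zero]

theorem stmt_5 :
    ¬ ∃ (i : CochainComplex AddCommGrpCat.{0} ℤ ⥤ CochainComplex AddCommGrpCat.{0} ℤ)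
        (ι : 𝟭 (CochainComplex AddCommGrpCat.{0} ℤ) ⟶ i),
      i.Additive ∧
      (∀ M : CochainComplex AddCommGrpCat.{0} ℤ,
        IsHInjective (i.obj M) ∧ ∀ n : ℤ, Injective ((i.obj M).X n)) ∧
      (∀ M : CochainComplex AddCommGrpCat.{0} ℤ, QuasiIso (ι.app M)) := by
  rintro ⟨i, ι, hAdd, hFib, hQI⟩
  let A := AddCommGrpCat.of (ZMod 2)
  let single₀ := HomologicalComplex.single AddCommGrpCat (ComplexShape.up ℤ) 0
  have h2 : (2 : ℤ) • 𝟙 ((i.obj (single₀.obj A)).X 0) = 0 :=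
    (single₀ ⋙ i ⋙ HomologicalComplex.eval _ _ 0).zsmul_id_obj_eq_zero
      (by exact_mod_cast AddCommGrpCat.natCast_zsmul_id_zmod_eq_zero 2)
  have hX : IsZero ((i.obj (single₀.obj A)).X 0) :=
    have := (hFib (single₀.obj A)).2 0
    AddCommGrpCat.isZero_of_injective_of_zsmul_id_eq_zero _ two_ne_zero h2
  have hiM : (i.obj (single₀.obj A)).ExactAt 0 :=
    (HomologicalComplex.exactAt_iff _ 0).2 (ShortComplex.exact_of_isZero_X₂ _ hX)
  have hM : (single₀.obj A).ExactAt 0 := (quasiIsoAt_iff_exactAt' (ι.app _) 0 hiM).1 inferInstance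
  exact AddCommGrpCat.isZero_iff_subsingleton.not.2 (not_subsingleton (ZMod 2))
    ((HomologicalComplex.exactAt_single_obj_self_iff _ _ A).1 hM)

end
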